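/- For λ < min(a, b), the function λ ↦ cosh⁻¹(F(λ)) where F(λ) = ((p+q)² cosh(sp+(1−s)q) − (p−q)² cosh(sp−(1−s)q))/(4pq), p = √(a−λ), q = √(b−λ), is well-defined and positive, i.e., the Floquet exponent κ(λ) is well-defined and strictly positive for all λ < min(a,b). -/
import Mathlib


theorem stmt_16 (a b lam s : ℝ) (hs : s ∈ Set.Ioo (0:ℝ) 1)
    (hlam : lam < min a b)
    (p q F : ℝ) (hp : p = Real.sqrt (a - lam)) (hq : q = Real.sqrt (b - lam))
    (hF : F = ((p + q) ^ 2 * Real.cosh (s * p + (1 - s) * q) -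
               (p - q) ^ 2 * Real.cosh (s * p - (1 - s) * q)) / (4 * p * q)) :
    1 < F ∧ ∃ κ : ℝ, 0 < κ ∧ Real.cosh κ = F := by
  obtain ⟨hs0, hs1⟩ := hs
  have hpa : 0 < a - lam := by have := lt_min_iff.mp hlam; linarith [this.1]
  have hqb : 0 < b - lam := by have := lt_min_iff.mp hlam; linarith [this.2]
  have hp0 : 0 < p := hp ▸ Real.sqrt_pos.mpr hpa
  have hq0 : 0 < q := hq ▸ Real.sqrt_pos.mpr hqb
  set x := s * p + (1 - s) * q with hx
  set y := s * p - (1 - s) * q with hy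
  have hsp : 0 < s * p := mul_pos hs0 hp0
  have hsq : 0 < (1 - s) * q := mul_pos (by linarith) hq0
  have hx0 : 0 < x := by positivity
  have hyx : |y| < |x| := by
    rw [abs_of_pos hx0, abs_lt]; constructor <;> [simp [hy, hx]; skip] <;> nlinarith
  have hcle : Real.cosh y < Real.cosh x := Real.cosh_lt_cosh.mpr hyx
  have hc1 : 1 < Real.cosh x := Real.one_lt_cosh.mpr (ne_of_gt hx0)
  have hF1 : 1 < F := by
    rw [hF, lt_div_iff₀ (by positivity)]
    nlinarith [mul_nonneg (sq_nonneg (p - q)) (sub_nonneg.mpr hcle.le), mul_pos (mul_pos hp0 hq0) (sub_pos.mpr hc1)]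
  refine ⟨hF1, Real.arsinh (Real.sqrt (F ^ 2 - 1)), ?_, ?_⟩
  · rw [Real.arsinh_pos_iff]
    exact Real.sqrt_pos.mpr (by nlinarith)
  · rw [Real.cosh_arsinh, Real.sq_sqrt (by nlinarith)]
    rw [show 1 + (F ^ 2 - 1) = F ^ 2 by ring, Real.sqrt_sq (by linarith)]
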